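/- The polynomials {Q_ε : ε ∈ E} form a ℚ(v)-basis of the space P(k,n) of polynomials in x_1,…,x_n over ℚ(v) that are homogeneous of total degree n−k and of degree at most 1 in each variable x_i. -/

import Mathlib

/-!
Order monomials lexicographically with `x₁ > x₂ > ⋯ > xₙ`. Every factor `x_p - v^(q+1-p) x_q`
of `Q_ε` has `p < q`, so its leading monomial is `x_p`; hence the leading monomial of `Q_ε` is the
product of `x_p` over all minus positions `p` of `ε`, matched or not, with leading coefficient
`v^(-d(ε))`. As `ε` runs over `E` these are exactly the squarefree monomials of degree `n - k`, each
occurring once. The variables of distinct factors of `Q_ε` are distinct, so `Q_ε ∈ P(k,n)`, and a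
family in `P(k,n)` whose leading monomials are distinct and include the leading monomial of every
nonzero element of `P(k,n)` is a basis of it, by triangularity.
-/

open scoped Classical

set_option maxHeartbeats 1000000
set_option synthInstance.maxHeartbeats 1000000

noncomputable section

/-- The field ℚ(v) of rational functions. -/
abbrev F : Type := RatFunc ℚ

/-- The variable v. -/
def v : F := RatFunc.X

/-- The quantum integer [r] = (v^r - v^{-r})/(v - v^{-1}). -/
def qint (r : ℕ) : F := (v ^ r - v⁻¹ ^ r) / (v - v⁻¹)

/-- Sequences of n signs (`true` = `+`) with exactly k pluses. -/
abbrev Stt (n k : ℕ) := {ε : Fin n → Bool // (Finset.univ.filter fun t => ε t = true).card = k}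

/-- The adjacent transposition s_m ∈ S_n (1-based: swaps positions m and m+1). -/
def sperm (n m : ℕ) : Equiv.Perm (Fin n) :=
  if h : 1 ≤ m ∧ m < n then Equiv.swap ⟨m - 1, by omega⟩ ⟨m, h.2⟩ else 1

/-- Action of w ∈ S_n on sequences: (w·ε)_{w(t)} = ε_t. -/
def actE {n : ℕ} (w : Equiv.Perm (Fin n)) (ε : Fin n → Bool) : Fin n → Bool :=
  fun u => ε (w⁻¹ u)

lemma card_actE {n k : ℕ} (w : Equiv.Perm (Fin n)) (ε : Fin n → Bool)
    (h : (Finset.univ.filter fun t => ε t = true).card = k) :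
    (Finset.univ.filter fun t => actE w ε t = true).card = k := by
  rw [← h]
  apply Finset.card_bij (fun t _ => w⁻¹ t)
  · intro a ha
    simp only [Finset.mem_filter, Finset.mem_univ, true_and, actE] at ha ⊢
    first | exact (Finset.mem_filter.mp ha).2 | exact ha.2 | exact ha
  · intro a _ b _ hab
    exact (Equiv.injective _) hab
  · intro b hb
    simp only [Finset.mem_filter, Finset.mem_univ, true_and, actE] at hb ⊢
    exact ⟨w b, by first | exact Finset.mem_filter.mpr ⟨Finset.mem_univ _, by simpa using hb⟩ | simpa using hb, by simp⟩

/-- Action of S_n on the set E of sequences with k pluses. -/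
def actS {n k : ℕ} (w : Equiv.Perm (Fin n)) (ε : Stt n k) : Stt n k :=
  ⟨actE w ε.1, card_actE w ε.1 ε.2⟩

/-- The module M, free over ℚ(v) with basis E. -/
abbrev M (n k : ℕ) := Stt n k → F

/-- The basis vector of M corresponding to ε ∈ E. -/
def bv {n k : ℕ} (ε : Stt n k) : M n k := Pi.single ε 1

/-- The sequence 𝟏 = (+,…,+,−,…,−) (k pluses then n−k minuses). -/
def oneSeq (n k : ℕ) : Fin n → Bool := fun t => decide ((t : ℕ) < k)

lemma card_oneSeq (n k : ℕ) (h : k ≤ n) :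
    (Finset.univ.filter fun t => oneSeq n k t = true).card = k := by
  have : (Finset.univ.filter fun t => oneSeq n k t = true)
      = Finset.univ.map (Fin.castLEEmb h) := by
    ext t
    simp only [Finset.mem_filter, Finset.mem_univ, true_and, oneSeq, decide_eq_true_eq,
      Finset.mem_map]
    constructor
    · intro ht; exact ⟨⟨t, ht⟩, rfl⟩
    · rintro ⟨s, rfl⟩; exact s.2
  rw [this, Finset.card_map, Finset.card_univ, Fintype.card_fin]

/-- 𝟏 as an element of E. -/
def oneS (n k : ℕ) (h : k ≤ n) : Stt n k := ⟨oneSeq n k, card_oneSeq n k h⟩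

/-- The operator T_m on M (1 ≤ m ≤ n−1), defined on basis elements. -/
def Thk (n k : ℕ) (m : ℕ) : M n k →ₗ[F] M n k :=
  (Pi.basisFun F (Stt n k)).constr ℕ fun ε =>
    if h : 1 ≤ m ∧ m < n then
      let a := ε.1 ⟨m - 1, by omega⟩
      let b := ε.1 ⟨m, h.2⟩
      if a = true ∧ b = false then bv (actS (sperm n m) ε)
      else if a = b then (-v⁻¹) • bv ε
      else bv (actS (sperm n m) ε) + (v - v⁻¹) • bv ε
    else 0

/-- A Young diagram inside the k×(n−k) rectangle, given by its row lengths
(1-based: row i has lam i boxes). -/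
def IsYoung (n k : ℕ) (lam : ℕ → ℕ) : Prop :=
  (∀ i, 1 ≤ i → lam (i + 1) ≤ lam i) ∧ lam 1 ≤ n - k ∧ (∀ i, k < i → lam i = 0)

/-- The boxes of λ, listed row by row from the bottom row to the top row,
each row from its last box to its first (so box (1,1) comes last). -/
def boxList (k : ℕ) (lam : ℕ → ℕ) : List (ℕ × ℕ) :=
  ((List.range k).reverse.map fun i' =>
    (List.range (lam (i' + 1))).reverse.map fun j' => (i' + 1, j' + 1)).flatten

/-- The word of w_λ: letter k+j−i for box (i,j). -/
def wword (k : ℕ) (lam : ℕ → ℕ) : List ℕ := (boxList k lam).map fun b => k + b.2 - b.1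

/-- The permutation w_λ = ∏_{(i,j)∈λ} s_{k+j−i} (box (1,1) rightmost). -/
def wperm (n k : ℕ) (lam : ℕ → ℕ) : Equiv.Perm (Fin n) := ((wword k lam).map (sperm n)).prod

/-- w_λ·𝟏 as an element of E. -/
def wSt (n k : ℕ) (h : k ≤ n) (lam : ℕ → ℕ) : Stt n k := actS (wperm n k lam) (oneS n k h)

/-- r is the system of shifts of λ: r_{ij} = max(r_{i,j+1}, r_{i+1,j}) + 1 on boxes of λ,
and r_{ij} = 0 off λ. -/
def IsShifts (lam : ℕ → ℕ) (r : ℕ → ℕ → ℕ) : Prop :=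
  ∀ i j, r i j = if 1 ≤ i ∧ 1 ≤ j ∧ j ≤ lam i then max (r i (j + 1)) (r (i + 1) j) + 1 else 0

/-- The operator X_λ = ∏_{(i,j)∈λ} (T_{k+j−i} − v^{r_{ij}}/[r_{ij}]), the factor of
box (1,1) applied first. -/
def Xop (n k : ℕ) (lam : ℕ → ℕ) (r : ℕ → ℕ → ℕ) : Module.End F (M n k) :=
  ((boxList k lam).map fun b =>
    (Thk n k (k + b.2 - b.1) - (v ^ r b.1 b.2 / qint (r b.1 b.2)) • (1 : Module.End F (M n k)) : Module.End F (M n k))).prod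

/-- O(v^m): rational functions with a zero of order ≥ m at v = 0. -/
def Ozero (m : ℕ) : Set F :=
  {f | ∃ p q : Polynomial ℚ, Polynomial.eval 0 q ≠ 0 ∧
        f = v ^ m * (algebraMap (Polynomial ℚ) F p / algebraMap (Polynomial ℚ) F q)}

/-- Value of a sequence at the 1-based position t. -/
def posVal {n : ℕ} (ε : Fin n → Bool) (t : ℕ) : Bool :=
  if h : 1 ≤ t ∧ t ≤ n then ε ⟨t - 1, by omega⟩ else false

/-- a(i) = k + λ_i − i + 1 for 1 ≤ i ≤ k, and a(i) = 0 for i > k. -/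
def aF (k : ℕ) (lam : ℕ → ℕ) (i : ℕ) : ℕ := if i ≤ k then k + lam i + 1 - i else 0

/-- The contribution r_t(ε) to the weight. -/
def weightT (k : ℕ) (lam : ℕ → ℕ) (r : ℕ → ℕ → ℕ) {n : ℕ} (ε : Fin n → Bool) (t : ℕ) : ℕ :=
  ∑ i ∈ Finset.Icc 1 k,
    ((if posVal ε t = false ∧ 1 ≤ lam i ∧ t = aF k lam i then r i (lam i) - 1 else 0) +
     (if posVal ε t = true ∧ aF k lam (i + 1) < t ∧ t < aF k lam i then r i (t + i - k) else 0))

/-- The weight r_λ(ε) = Σ_{t=1}^n r_t(ε). -/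
def weight (n k : ℕ) (lam : ℕ → ℕ) (r : ℕ → ℕ → ℕ) (ε : Fin n → Bool) : ℕ :=
  ∑ t ∈ Finset.Icc 1 n, weightT k lam r ε t

/-- 𝓛_λ = Σ_ε O(v^{r_λ(ε)}) ε. -/
def Lset (n k : ℕ) (lam : ℕ → ℕ) (r : ℕ → ℕ → ℕ) : Set (M n k) :=
  {m | ∀ ε : Stt n k, m ε ∈ Ozero (weight n k lam r ε.1)}

/-- The length (number of inversions) of a permutation. -/
def len {n : ℕ} (w : Equiv.Perm (Fin n)) : ℕ :=
  (Finset.univ.filter fun p : Fin n × Fin n => p.1 < p.2 ∧ w p.2 < w p.1).card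

/-- The parabolic subgroup W_J = S_k × S_{n−k}: permutations mapping {1,…,k} to itself. -/
def WJ (n k : ℕ) : Set (Equiv.Perm (Fin n)) :=
  {σ | ∀ t : Fin n, (t : ℕ) < k → ((σ t : ℕ) < k)}

/-- W^J: permutations of minimal length in their coset w·W_J. -/
def Wmin (n k : ℕ) : Set (Equiv.Perm (Fin n)) :=
  {w | ∀ σ ∈ WJ n k, len w ≤ len (w * σ)}

/-- The variable x_p (1-based position p) in ℚ(v)[x_1,…,x_n]. -/
def xv (n p : ℕ) : MvPolynomial (Fin n) F :=
  if h : 1 ≤ p ∧ p ≤ n then MvPolynomial.X ⟨p - 1, by omega⟩ else 0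

/-- Exchange of the variables x_i and x_{i+1} (1-based, 1 ≤ i ≤ n−1). -/
def swapf (n i : ℕ) (f : MvPolynomial (Fin n) F) : MvPolynomial (Fin n) F :=
  if h : 1 ≤ i ∧ i < n then
    MvPolynomial.rename (Equiv.swap ⟨i - 1, by omega⟩ ⟨i, h.2⟩) f
  else f

/-- The divided difference ∂_i f = (f − s_i f)/(x_i − x_{i+1}). -/
def ddiff (n i : ℕ) (f : MvPolynomial (Fin n) F) : MvPolynomial (Fin n) F :=
  if h : ∃ g, f - swapf n i f = (xv n i - xv n (i + 1)) * g then h.choose else 0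

/-- The operator ∇_i f = (v x_{i+1} − v⁻¹ x_i)·∂_i f. -/
def nabla (n i : ℕ) (f : MvPolynomial (Fin n) F) : MvPolynomial (Fin n) F :=
  (MvPolynomial.C v * xv n (i + 1) - MvPolynomial.C v⁻¹ * xv n i) * ddiff n i f

/-- Parenthesis matching: minuses (`false`) are openers, pluses (`true`) are closers;
each plus is matched with the most recent unmatched minus, i.e. each minus with the first
subsequent unmatched plus.  Returns the list of matched pairs (p,q) of 1-based positions
and the list of unmatched minus positions. -/
def matchAux : List Bool → ℕ → List ℕ → List (ℕ × ℕ) × List ℕ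
  | [], _, stack => ([], stack)
  | b :: rest, pos, stack =>
    if b then
      match stack with
      | [] => matchAux rest (pos + 1) []
      | p :: stack' =>
        let res := matchAux rest (pos + 1) stack'
        ((p, pos) :: res.1, res.2)
    else matchAux rest (pos + 1) (pos :: stack)

/-- d(ε) = #{(p,q) : p < q, ε_p = −, ε_q = +}. -/
def dstat {n : ℕ} (ε : Fin n → Bool) : ℕ :=
  (Finset.univ.filter fun pq : Fin n × Fin n =>
    pq.1 < pq.2 ∧ ε pq.1 = false ∧ ε pq.2 = true).card

/-- The polynomial Q_ε. -/
def Qpoly (n : ℕ) (ε : Fin n → Bool) : MvPolynomial (Fin n) F :=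
  MvPolynomial.C (v⁻¹ ^ dstat ε) *
    ((matchAux (List.ofFn ε) 1 []).1.map fun pq =>
        xv n pq.1 - MvPolynomial.C (v ^ (pq.2 + 1 - pq.1)) * xv n pq.2).prod *
    ((matchAux (List.ofFn ε) 1 []).2.map fun p => xv n p).prod

/-- The operator T_m on M′ (the parabolic module induced from T_j ↦ v). -/
def Thk' (n k : ℕ) (m : ℕ) : M n k →ₗ[F] M n k :=
  (Pi.basisFun F (Stt n k)).constr ℕ fun ε =>
    if h : 1 ≤ m ∧ m < n then
      let a := ε.1 ⟨m - 1, by omega⟩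
      let b := ε.1 ⟨m, h.2⟩
      if a = true ∧ b = false then bv (actS (sperm n m) ε)
      else if a = b then v • bv ε
      else bv (actS (sperm n m) ε) + (v - v⁻¹) • bv ε
    else 0

/-- The map Φ : M′ → ℚ(v)[x_1,…,x_n], ε ↦ v^{−d(ε)} ∏_{t : ε_t = −} x_t. -/
def Phi (n k : ℕ) : M n k →ₗ[F] MvPolynomial (Fin n) F :=
  (Pi.basisFun F (Stt n k)).constr ℕ fun ε =>
    MvPolynomial.C (v⁻¹ ^ dstat ε.1) *
      ∏ t ∈ Finset.univ.filter (fun t => ε.1 t = false), MvPolynomial.X t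

/-- The space P(k,n): polynomials homogeneous of total degree n−k, of degree ≤ 1 in each
variable. -/
def Pspace (n k : ℕ) : Set (MvPolynomial (Fin n) F) :=
  {f | f.IsHomogeneous (n - k) ∧ ∀ t : Fin n, f.degreeOf t ≤ 1}

open MvPolynomial

namespace MonomialOrder

variable {σ : Type*} (m : MonomialOrder σ)

section Field

variable {ι K : Type*} [Field K]

theorem linearIndependent_of_injective_degree {f : ι → MvPolynomial σ K} (hf : ∀ i, f i ≠ 0)
    (hinj : Function.Injective fun i => m.degree (f i)) : LinearIndependent K f := by
  rw [linearIndependent_iff']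
  intro s g hsum i hi
  by_contra hgi
  obtain ⟨i₀, hi₀, hmax⟩ := (s.filter (g · ≠ 0)).exists_max_image
    (fun i => m.toSyn (m.degree (f i))) ⟨i, Finset.mem_filter.mpr ⟨hi, hgi⟩⟩
  obtain ⟨hi₀s, hgi₀⟩ := Finset.mem_filter.mp hi₀
  have hcoeff := congrArg (coeff (m.degree (f i₀))) hsum
  rw [coeff_sum, coeff_zero, Finset.sum_eq_single_of_mem i₀ hi₀s] at hcoeff
  · rw [coeff_smul, smul_eq_mul, ← leadingCoeff] at hcoeff
    exact mul_ne_zero hgi₀ (m.leadingCoeff_ne_zero_iff.mpr (hf i₀)) hcoeff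
  · intro j hj hji₀
    by_cases hgj : g j = 0
    · rw [hgj, zero_smul, coeff_zero]
    · have hlt : m.degree (f j) ≺[m] m.degree (f i₀) :=
        (hmax j (Finset.mem_filter.mpr ⟨hj, hgj⟩)).lt_of_ne
          (m.toSyn.injective.ne (hinj.ne hji₀))
      rw [coeff_smul, m.coeff_eq_zero_of_lt hlt, smul_zero]

theorem le_span_of_forall_degree_eq {P : Submodule K (MvPolynomial σ K)}
    {f : ι → MvPolynomial σ K} (hfP : ∀ i, f i ∈ P) (hf : ∀ i, f i ≠ 0)
    (hdeg : ∀ g ∈ P, g ≠ 0 → ∃ i, m.degree (f i) = m.degree g) :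
    P ≤ Submodule.span K (Set.range f) := by
  intro g hg
  induction hd : m.toSyn (m.degree g) using WellFoundedLT.induction generalizing g with
  | ind d ih =>
    by_cases hg0 : g = 0
    · rw [hg0]; exact Submodule.zero_mem _
    obtain ⟨i, hi⟩ := hdeg g hg hg0
    have hs : m.sPolynomial (f i) g = m.leadingCoeff g • f i - m.leadingCoeff (f i) • g := by
      rw [sPolynomial_def, hi, sup_idem, tsub_self, ← C_apply, ← C_apply, smul_eq_C_mul,
        smul_eq_C_mul]
    have hsP : m.sPolynomial (f i) g ∈ P := by
      rw [hs]; exact P.sub_mem (P.smul_mem _ (hfP i)) (P.smul_mem _ hg)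
    have hs_span : m.sPolynomial (f i) g ∈ Submodule.span K (Set.range f) := by
      by_cases hs0 : m.sPolynomial (f i) g = 0
      · rw [hs0]; exact Submodule.zero_mem _
      · refine ih _ ?_ hsP rfl
        rw [← hd, ← hi]
        exact m.sPolynomial_lt_of_degree_ne_zero_of_degree_eq hi hs0
    have hlc : m.leadingCoeff (f i) ≠ 0 := m.leadingCoeff_ne_zero_iff.mpr (hf i)
    have hg_eq : g = (m.leadingCoeff (f i))⁻¹ •
        (m.leadingCoeff g • f i - m.sPolynomial (f i) g) := by
      rw [hs, sub_sub_cancel, smul_smul, inv_mul_cancel₀ hlc, one_smul]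
    rw [hg_eq]
    exact Submodule.smul_mem _ _ (Submodule.sub_mem _
      (Submodule.smul_mem _ _ (Submodule.subset_span ⟨i, rfl⟩)) hs_span)

end Field

section Monic

variable {R : Type*} [CommSemiring R]

theorem Monic.list_prod {L : List (MvPolynomial σ R)} (h : ∀ f ∈ L, m.Monic f) :
    m.Monic L.prod := by
  induction L with
  | nil => exact m.monic_one
  | cons f L ih =>
    rw [List.prod_cons]
    exact (h f List.mem_cons_self).mul (ih fun g hg => h g (List.mem_cons_of_mem f hg))

theorem degree_list_prod_of_monic [Nontrivial R] {L : List (MvPolynomial σ R)}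
    (h : ∀ f ∈ L, m.Monic f) : m.degree L.prod = (L.map m.degree).sum := by
  induction L with
  | nil => exact m.degree_one
  | cons f L ih =>
    have hL : ∀ g ∈ L, m.Monic g := fun g hg => h g (List.mem_cons_of_mem f hg)
    rw [List.prod_cons, List.map_cons, List.sum_cons, ← ih hL]
    apply m.degree_mul_of_mul_leadingCoeff_ne_zero
    rw [(h f List.mem_cons_self).leadingCoeff_eq_one, (Monic.list_prod m hL).leadingCoeff_eq_one,
      one_mul]
    exact one_ne_zero

end Monic

theorem lex_X_sub_C_mul_X {R : Type*} [LinearOrder σ] [WellFoundedGT σ] [CommRing R]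
    [Nontrivial R] {s t : σ} (hst : s < t) (c : R) :
    lex.Monic (X s - C c * X t) ∧ lex.degree (X s - C c * X t) = Finsupp.single s 1 := by
  have hlt : lex.degree (C c * X t) ≺[lex] lex.degree (X s : MvPolynomial σ R) := by
    rw [degree_X]
    refine lt_of_le_of_lt ?_ (Finsupp.Lex.single_lt_iff.mpr hst)
    rw [C_mul_X_eq_monomial]
    exact lex.degree_monomial_le c
  refine ⟨?_, ?_⟩
  · rw [Monic, lex.leadingCoeff_sub_of_lt hlt, leadingCoeff_X]
  · rw [lex.degree_sub_of_lt hlt, degree_X]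

end MonomialOrder

namespace MvPolynomial

variable {σ R : Type*} [CommSemiring R]

theorem degreeOf_list_prod_le (i : σ) (L : List (MvPolynomial σ R)) :
    degreeOf i L.prod ≤ (L.map (degreeOf i)).sum := by
  induction L with
  | nil => simp
  | cons f L ih =>
    rw [List.prod_cons, List.map_cons, List.sum_cons]
    exact (degreeOf_mul_le i f _).trans (Nat.add_le_add_left ih _)

theorem IsHomogeneous.list_prod {L : List (MvPolynomial σ R)} (h : ∀ f ∈ L, f.IsHomogeneous 1) :
    L.prod.IsHomogeneous L.length := by
  induction L with
  | nil => exact isHomogeneous_one σ R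
  | cons f L ih =>
    rw [List.prod_cons, List.length_cons, add_comm]
    exact (h f List.mem_cons_self).mul (ih fun g hg => h g (List.mem_cons_of_mem f hg))

theorem IsHomogeneous.degree_eq_of_mem_support {φ : MvPolynomial σ R} {n : ℕ}
    (hφ : φ.IsHomogeneous n) {d : σ →₀ ℕ} (hd : d ∈ φ.support) : d.degree = n := by
  by_contra h
  exact mem_support_iff.mp hd (hφ.coeff_eq_zero h)

end MvPolynomial

def positions (b : Bool) : List Bool → ℕ → List ℕ
  | [], _ => []
  | c :: l, pos => if c = b then pos :: positions b l (pos + 1) else positions b l (pos + 1)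

theorem mem_positions {b : Bool} {l : List Bool} {pos p : ℕ} :
    p ∈ positions b l pos ↔ ∃ j, p = pos + j ∧ l[j]? = some b := by
  induction l generalizing pos with
  | nil => simp [positions]
  | cons c l ih =>
    have hshift : (∃ j, p = pos + 1 + j ∧ l[j]? = some b) ↔
        ∃ j, p = pos + j ∧ 0 < j ∧ (c :: l)[j]? = some b := by
      constructor
      · rintro ⟨j, rfl, hj⟩
        exact ⟨j + 1, by omega, by omega, hj⟩
      · rintro ⟨_ | j, rfl, hj, hget⟩
        · omega
        · exact ⟨j, by omega, hget⟩
    by_cases hc : c = b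
    · simp only [positions, hc, if_true, List.mem_cons, ih, hshift]
      constructor
      · rintro (rfl | ⟨j, rfl, -, hget⟩)
        · exact ⟨0, rfl, by simp⟩
        · exact ⟨j, rfl, hget⟩
      · rintro ⟨_ | j, rfl, hget⟩
        · exact Or.inl rfl
        · exact Or.inr ⟨j + 1, rfl, by omega, hget⟩
    · simp only [positions, hc, if_false, ih, hshift]
      constructor
      · rintro ⟨j, rfl, -, hget⟩
        exact ⟨j, rfl, hget⟩
      · rintro ⟨_ | j, rfl, hget⟩
        · simp at hget; exact absurd hget hc
        · exact ⟨j + 1, rfl, by omega, hget⟩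

theorem le_of_mem_positions {b : Bool} {l : List Bool} {pos p : ℕ}
    (h : p ∈ positions b l pos) : pos ≤ p := by
  obtain ⟨j, rfl, -⟩ := mem_positions.mp h
  omega

theorem positions_sorted (b : Bool) (l : List Bool) (pos : ℕ) :
    (positions b l pos).Pairwise (· < ·) := by
  induction l generalizing pos with
  | nil => exact List.Pairwise.nil
  | cons c l ih =>
    unfold positions
    split_ifs
    · exact List.Pairwise.cons (fun p hp => le_of_mem_positions hp) (ih _)
    · exact ih _

theorem disjoint_positions_true_false (l : List Bool) (pos : ℕ) :
    (positions true l pos).Disjoint (positions false l pos) := by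
  intro p htrue hfalse
  obtain ⟨j, rfl, hj⟩ := mem_positions.mp htrue
  obtain ⟨j', hj', hj'get⟩ := mem_positions.mp hfalse
  obtain rfl : j' = j := by omega
  rw [hj] at hj'get
  exact Bool.noConfusion (Option.some.inj hj'get)

theorem matchAux_fst_append_perm (l : List Bool) (pos : ℕ) (stack : List ℕ) :
    ((matchAux l pos stack).1.map Prod.fst ++ (matchAux l pos stack).2).Perm
      (stack ++ positions false l pos) := by
  induction l generalizing pos stack with
  | nil => simp [matchAux, positions]
  | cons b l ih =>
    cases b with
    | true =>
      cases stack with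
      | nil => simpa [matchAux, positions] using ih (pos + 1) []
      | cons p stack => simpa [matchAux, positions] using (ih (pos + 1) stack).cons p
    | false =>
      simpa [matchAux, positions] using (ih (pos + 1) (pos :: stack)).trans List.perm_middle.symm

theorem matchAux_snd_sublist (l : List Bool) (pos : ℕ) (stack : List ℕ) :
    ((matchAux l pos stack).1.map Prod.snd).Sublist (positions true l pos) := by
  induction l generalizing pos stack with
  | nil => simp [matchAux, positions]
  | cons b l ih =>
    cases b with
    | true =>
      cases stack with
      | nil => simpa [matchAux, positions] using (ih (pos + 1) []).cons pos
      | cons p stack => simpa [matchAux, positions] using (ih (pos + 1) stack).cons_cons pos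
    | false => simpa [matchAux, positions] using ih (pos + 1) (pos :: stack)

theorem matchAux_fst_lt_snd (l : List Bool) (pos : ℕ) (stack : List ℕ)
    (hstack : ∀ s ∈ stack, s < pos) : ∀ pq ∈ (matchAux l pos stack).1, pq.1 < pq.2 := by
  induction l generalizing pos stack with
  | nil => simp [matchAux]
  | cons b l ih =>
    cases b with
    | true =>
      cases stack with
      | nil => simpa [matchAux] using ih (pos + 1) [] (by simp)
      | cons p stack =>
        simp only [matchAux, if_true, List.mem_cons, forall_eq_or_imp]
        exact ⟨hstack p List.mem_cons_self, ih (pos + 1) stack fun s hs =>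
          (hstack s (List.mem_cons_of_mem p hs)).trans (Nat.lt_succ_self pos)⟩
    | false =>
      simp only [matchAux, Bool.false_eq_true, if_false]
      exact ih (pos + 1) (pos :: stack) fun s hs => by
        rcases List.mem_cons.mp hs with rfl | hs
        · exact Nat.lt_succ_self s
        · exact (hstack s hs).trans (Nat.lt_succ_self pos)

theorem mem_positions_ofFn {n : ℕ} {ε : Fin n → Bool} {b : Bool} {p : ℕ} :
    p ∈ positions b (List.ofFn ε) 1 ↔ ∃ t : Fin n, p = t + 1 ∧ ε t = b := by
  rw [mem_positions]
  constructor
  · rintro ⟨j, rfl, hj⟩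
    rw [List.getElem?_ofFn] at hj
    split_ifs at hj with hjn
    exact ⟨⟨j, hjn⟩, add_comm 1 j, Option.some.inj hj⟩
  · rintro ⟨t, rfl, rfl⟩
    exact ⟨t, add_comm _ _, by rw [List.getElem?_ofFn, dif_pos t.2]⟩

def matchedPairs {n : ℕ} (ε : Fin n → Bool) : List (ℕ × ℕ) := (matchAux (List.ofFn ε) 1 []).1

def unmatchedMinuses {n : ℕ} (ε : Fin n → Bool) : List ℕ := (matchAux (List.ofFn ε) 1 []).2

section Matching

variable {n : ℕ} (ε : Fin n → Bool)

theorem matched_fst_append_unmatched_perm :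
    ((matchedPairs ε).map Prod.fst ++ unmatchedMinuses ε).Perm
      (positions false (List.ofFn ε) 1) :=
  matchAux_fst_append_perm _ _ _

theorem exists_of_mem_matchedPairs {pq : ℕ × ℕ} (h : pq ∈ matchedPairs ε) :
    ∃ s t : Fin n, pq = ((s : ℕ) + 1, (t : ℕ) + 1) ∧ s < t := by
  have hfst : pq.1 ∈ positions false (List.ofFn ε) 1 :=
    (matched_fst_append_unmatched_perm ε).subset
      (List.mem_append_left _ (List.mem_map_of_mem h))
  have hsnd : pq.2 ∈ positions true (List.ofFn ε) 1 :=
    (matchAux_snd_sublist _ _ _).subset (List.mem_map_of_mem h)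
  obtain ⟨s, hs, -⟩ := mem_positions_ofFn.mp hfst
  obtain ⟨t, ht, -⟩ := mem_positions_ofFn.mp hsnd
  have hlt := matchAux_fst_lt_snd (List.ofFn ε) 1 [] (by simp) pq h
  exact ⟨s, t, Prod.ext hs ht, Fin.lt_def.mpr (by omega)⟩

theorem exists_of_mem_unmatchedMinuses {u : ℕ} (h : u ∈ unmatchedMinuses ε) :
    ∃ s : Fin n, u = s + 1 := by
  obtain ⟨s, hs, -⟩ := mem_positions_ofFn.mp
    ((matched_fst_append_unmatched_perm ε).subset (List.mem_append_right _ h))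
  exact ⟨s, hs⟩

theorem nodup_matched_positions :
    ((matchedPairs ε).map Prod.fst ++ unmatchedMinuses ε ++ (matchedPairs ε).map Prod.snd).Nodup :=
  List.Nodup.append
    ((matched_fst_append_unmatched_perm ε).nodup_iff.mpr (positions_sorted _ _ _).nodup)
    ((matchAux_snd_sublist _ _ _).nodup (positions_sorted _ _ _).nodup)
    fun _ hA hB => disjoint_positions_true_false _ _
      ((matchAux_snd_sublist _ _ _).subset hB) ((matched_fst_append_unmatched_perm ε).subset hA)

end Matching

section Variables

variable {n : ℕ}

theorem xv_succ (t : Fin n) : xv n (t + 1) = X t := by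
  rw [xv, dif_pos ⟨by omega, t.2⟩]
  rfl

theorem degreeOf_xv (p : ℕ) (t : Fin n) : degreeOf t (xv n p) = if p = t + 1 then 1 else 0 := by
  unfold xv
  split_ifs with hp hpt hpt
  · rw [degreeOf_X, if_pos (Fin.ext (by simp; omega))]
  · rw [degreeOf_X, if_neg fun h => hpt (by rw [h]; simp; omega)]
  · omega
  · exact degreeOf_zero t

theorem lex_degree_xv_apply (p : ℕ) (t : Fin n) :
    MonomialOrder.lex.degree (xv n p) t = if p = t + 1 then 1 else 0 := by
  unfold xv
  split_ifs with hp hpt hpt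
  · rw [MonomialOrder.degree_X, Finsupp.single_apply, if_pos (Fin.ext (by simp; omega))]
  · rw [MonomialOrder.degree_X, Finsupp.single_apply,
      if_neg fun h => hpt (by rw [← h]; simp; omega)]
  · omega
  · rw [MonomialOrder.degree_zero, Finsupp.coe_zero, Pi.zero_apply]

theorem sum_degreeOf_xv (L : List ℕ) (t : Fin n) :
    (L.map fun p => degreeOf t (xv n p)).sum = L.count ((t : ℕ) + 1) := by
  induction L with
  | nil => rfl
  | cons p L ih =>
    rw [List.map_cons, List.sum_cons, ih, degreeOf_xv, List.count_cons, add_comm]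
    simp [beq_iff_eq]

theorem sum_lex_degree_xv_apply (L : List ℕ) (t : Fin n) :
    (L.map fun p => MonomialOrder.lex.degree (xv n p)).sum t = L.count ((t : ℕ) + 1) := by
  induction L with
  | nil => rfl
  | cons p L ih =>
    rw [List.map_cons, List.sum_cons, Finsupp.add_apply, ih, lex_degree_xv_apply, List.count_cons,
      add_comm]
    simp [beq_iff_eq]

theorem isHomogeneous_xv (p : ℕ) : (xv n p).IsHomogeneous 1 := by
  unfold xv
  split_ifs
  · exact isHomogeneous_X F _
  · exact isHomogeneous_zero _ _ _

end Variables

def pairFactor (n : ℕ) (pq : ℕ × ℕ) : MvPolynomial (Fin n) F :=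
  xv n pq.1 - C (v ^ (pq.2 + 1 - pq.1)) * xv n pq.2

def matchingProduct {n : ℕ} (ε : Fin n → Bool) : MvPolynomial (Fin n) F :=
  ((matchedPairs ε).map (pairFactor n)).prod * ((unmatchedMinuses ε).map (xv n)).prod

theorem Qpoly_eq_C_mul {n : ℕ} (ε : Fin n → Bool) :
    Qpoly n ε = C (v⁻¹ ^ dstat ε) * matchingProduct ε :=
  mul_assoc _ _ _

section MatchingProduct

variable {n : ℕ} (ε : Fin n → Bool)

theorem count_positions_ofFn (b : Bool) (t : Fin n) :
    (positions b (List.ofFn ε) 1).count ((t : ℕ) + 1) = if ε t = b then 1 else 0 := by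
  rw [(positions_sorted _ _ _).nodup.count]
  congr 1
  apply propext
  rw [mem_positions_ofFn]
  constructor
  · rintro ⟨s, hs, rfl⟩
    rw [Fin.ext (Nat.succ_injective hs)]
  · intro ht
    exact ⟨t, rfl, ht⟩

theorem lex_monic_pairFactor {pq : ℕ × ℕ} (h : pq ∈ matchedPairs ε) :
    MonomialOrder.lex.Monic (pairFactor n pq) ∧
      MonomialOrder.lex.degree (pairFactor n pq) = MonomialOrder.lex.degree (xv n pq.1) := by
  obtain ⟨s, t, rfl, hst⟩ := exists_of_mem_matchedPairs ε h
  rw [pairFactor, xv_succ, xv_succ, MonomialOrder.degree_X]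
  exact MonomialOrder.lex_X_sub_C_mul_X hst _

theorem lex_monic_of_mem_map_pairFactor :
    ∀ f ∈ (matchedPairs ε).map (pairFactor n), MonomialOrder.lex.Monic f := by
  simp only [List.mem_map]
  rintro _ ⟨pq, hpq, rfl⟩
  exact (lex_monic_pairFactor ε hpq).1

theorem lex_monic_of_mem_map_xv :
    ∀ f ∈ (unmatchedMinuses ε).map (xv n), MonomialOrder.lex.Monic f := by
  simp only [List.mem_map]
  rintro _ ⟨u, hu, rfl⟩
  obtain ⟨s, rfl⟩ := exists_of_mem_unmatchedMinuses ε hu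
  rw [xv_succ]
  exact MonomialOrder.monic_X

theorem lex_monic_matchingProduct : MonomialOrder.lex.Monic (matchingProduct ε) :=
  (MonomialOrder.Monic.list_prod _ (lex_monic_of_mem_map_pairFactor ε)).mul
    (MonomialOrder.Monic.list_prod _ (lex_monic_of_mem_map_xv ε))

theorem lex_degree_matchingProduct :
    MonomialOrder.lex.degree (matchingProduct ε) =
      (((matchedPairs ε).map Prod.fst ++ unmatchedMinuses ε).map
        fun p => MonomialOrder.lex.degree (xv n p)).sum := by
  have hpairs := lex_monic_of_mem_map_pairFactor ε
  have hunmatched := lex_monic_of_mem_map_xv ε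
  have hfst : ((matchedPairs ε).map (pairFactor n)).map MonomialOrder.lex.degree =
      ((matchedPairs ε).map Prod.fst).map fun p => MonomialOrder.lex.degree (xv n p) := by
    simp only [List.map_map]
    exact List.map_congr_left fun pq hpq => (lex_monic_pairFactor ε hpq).2
  rw [matchingProduct, MonomialOrder.degree_mul (MonomialOrder.Monic.list_prod _ hpairs).ne_zero
    (MonomialOrder.Monic.list_prod _ hunmatched).ne_zero,
    MonomialOrder.degree_list_prod_of_monic _ hpairs,
    MonomialOrder.degree_list_prod_of_monic _ hunmatched, hfst, List.map_append, List.sum_append,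
    List.map_map (l := unmatchedMinuses ε)]
  rfl

theorem lex_degree_matchingProduct_apply (t : Fin n) :
    MonomialOrder.lex.degree (matchingProduct ε) t = if ε t = false then 1 else 0 := by
  rw [lex_degree_matchingProduct, sum_lex_degree_xv_apply,
    (matched_fst_append_unmatched_perm ε).count_eq, count_positions_ofFn]

theorem degreeOf_matchingProduct_le (t : Fin n) : degreeOf t (matchingProduct ε) ≤ 1 := by
  let d : ℕ → ℕ := fun p => degreeOf t (xv n p)
  have hfactor : ∀ pq ∈ matchedPairs ε, degreeOf t (pairFactor n pq) ≤ d pq.1 + d pq.2 :=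
    fun pq _ => (degreeOf_sub_le t _ _).trans
      (max_le (Nat.le_add_right _ _) ((degreeOf_C_mul_le _ t _).trans (Nat.le_add_left _ _)))
  calc degreeOf t (matchingProduct ε)
      ≤ (((matchedPairs ε).map (pairFactor n)).map (degreeOf t)).sum +
          (((unmatchedMinuses ε).map (xv n)).map (degreeOf t)).sum :=
        (degreeOf_mul_le t _ _).trans
          (add_le_add (degreeOf_list_prod_le t _) (degreeOf_list_prod_le t _))
    _ ≤ ((matchedPairs ε).map fun pq => d pq.1 + d pq.2).sum +
          ((unmatchedMinuses ε).map d).sum := by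
        simp only [List.map_map]
        exact add_le_add (List.sum_le_sum hfactor) le_rfl
    _ = (((matchedPairs ε).map Prod.fst ++ unmatchedMinuses ε ++
          (matchedPairs ε).map Prod.snd).map d).sum := by
        simp only [List.sum_map_add, List.map_append, List.sum_append, List.map_map,
          Function.comp_def]
        ring
    _ ≤ 1 := by
        rw [sum_degreeOf_xv]
        exact List.nodup_iff_count_le_one.mp (nodup_matched_positions ε) _

theorem isHomogeneous_matchingProduct :
    (matchingProduct ε).IsHomogeneous ((matchedPairs ε).length + (unmatchedMinuses ε).length) := by
  have hpairs := IsHomogeneous.list_prod (L := (matchedPairs ε).map (pairFactor n)) <| by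
    simp only [List.mem_map]
    rintro _ ⟨pq, -, rfl⟩
    exact (isHomogeneous_xv _).sub ((isHomogeneous_xv _).C_mul _)
  have hunmatched := IsHomogeneous.list_prod (L := (unmatchedMinuses ε).map (xv n)) <| by
    simp only [List.mem_map]
    rintro _ ⟨u, -, rfl⟩
    exact isHomogeneous_xv _
  rw [List.length_map] at hpairs hunmatched
  exact hpairs.mul hunmatched

end MatchingProduct

section Qpoly

variable {n : ℕ}

theorem lex_degree_Qpoly_apply (ε : Fin n → Bool) (t : Fin n) :
    MonomialOrder.lex.degree (Qpoly n ε) t = if ε t = false then 1 else 0 := by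
  have hC : (C (v⁻¹ ^ dstat ε) : MvPolynomial (Fin n) F) ≠ 0 :=
    C_ne_zero.mpr (pow_ne_zero _ (inv_ne_zero RatFunc.X_ne_zero))
  rw [Qpoly_eq_C_mul, MonomialOrder.degree_mul hC (lex_monic_matchingProduct ε).ne_zero,
    MonomialOrder.degree_C, zero_add, lex_degree_matchingProduct_apply]

theorem lex_leadingCoeff_Qpoly (ε : Fin n → Bool) :
    MonomialOrder.lex.leadingCoeff (Qpoly n ε) = v⁻¹ ^ dstat ε := by
  rw [Qpoly_eq_C_mul, MonomialOrder.leadingCoeff_mul, MonomialOrder.leadingCoeff_C,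
    (lex_monic_matchingProduct ε).leadingCoeff_eq_one, mul_one]

theorem Qpoly_ne_zero (ε : Fin n → Bool) : Qpoly n ε ≠ 0 := by
  rw [← MonomialOrder.lex.leadingCoeff_ne_zero_iff, lex_leadingCoeff_Qpoly]
  exact pow_ne_zero _ (inv_ne_zero RatFunc.X_ne_zero)

theorem lex_degree_Qpoly_injective :
    Function.Injective fun ε : Fin n → Bool => MonomialOrder.lex.degree (Qpoly n ε) := by
  intro ε δ h
  funext t
  have := DFunLike.congr_fun h t
  simp only [lex_degree_Qpoly_apply] at this
  cases hε : ε t <;> cases hδ : δ t <;> simp_all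

theorem sum_boole_not_eq_sub_card (ε : Fin n → Bool) :
    ∑ t, (if ε t = false then 1 else 0) = n - (Finset.univ.filter fun t => ε t = true).card := by
  have h := Finset.card_filter_add_card_filter_not (s := Finset.univ) fun t => ε t = true
  simp only [Bool.not_eq_true, Finset.card_univ, Fintype.card_fin] at h
  rw [Finset.sum_boole, Nat.cast_id]
  omega

theorem degree_lex_degree_Qpoly {k : ℕ} (ε : Stt n k) :
    (MonomialOrder.lex.degree (Qpoly n ε.1)).degree = n - k := by
  simp only [Finsupp.degree_eq_sum, lex_degree_Qpoly_apply]
  rw [sum_boole_not_eq_sub_card, ε.2]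

theorem Qpoly_mem_homogeneousSubmodule {k : ℕ} (ε : Stt n k) :
    Qpoly n ε.1 ∈ homogeneousSubmodule (Fin n) F (n - k) := by
  have hhom := (isHomogeneous_matchingProduct ε.1).C_mul (v⁻¹ ^ dstat ε.1)
  rw [← Qpoly_eq_C_mul] at hhom
  have hdeg := hhom.degree_eq_of_mem_support
    ((MonomialOrder.lex.degree_mem_support_iff _).mpr (Qpoly_ne_zero ε.1))
  rw [degree_lex_degree_Qpoly] at hdeg
  rw [mem_homogeneousSubmodule, hdeg]
  exact hhom

theorem Qpoly_mem_restrictDegree (ε : Fin n → Bool) : Qpoly n ε ∈ restrictDegree (Fin n) F 1 := by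
  rw [mem_restrictDegree]
  intro s hs t
  refine degreeOf_le_iff.mp ?_ s hs
  rw [Qpoly_eq_C_mul]
  exact (degreeOf_C_mul_le _ t _).trans (degreeOf_matchingProduct_le ε t)

end Qpoly

theorem Pspace_eq (n k : ℕ) :
    Pspace n k = (homogeneousSubmodule (Fin n) F (n - k) ⊓ restrictDegree (Fin n) F 1 :
      Submodule F (MvPolynomial (Fin n) F)) := by
  ext f
  simp only [Pspace, Set.mem_ofPred_eq, SetLike.mem_coe, Submodule.mem_inf,
    mem_homogeneousSubmodule, mem_restrictDegree, degreeOf_le_iff]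
  exact and_congr_right fun _ => forall_comm.trans (forall_congr' fun _ => forall_comm)

theorem exists_lex_degree_Qpoly_eq {n k : ℕ} (hkn : k ≤ n) {e : Fin n →₀ ℕ} (he : ∀ t, e t ≤ 1)
    (hdeg : e.degree = n - k) : ∃ ε : Stt n k, MonomialOrder.lex.degree (Qpoly n ε.1) = e := by
  let ε : Fin n → Bool := fun t => e t == 0
  have hε : ∀ t, (if ε t = false then 1 else 0) = e t := by
    intro t
    have := he t
    by_cases h : e t = 0 <;> simp [ε, h]; omega
  have hcard : (Finset.univ.filter fun t => ε t = true).card = k := by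
    have := sum_boole_not_eq_sub_card ε
    simp only [hε, ← Finsupp.degree_eq_sum, hdeg] at this
    have := (Finset.univ.filter fun t => ε t = true).card_le_univ
    rw [Fintype.card_fin] at this
    omega
  exact ⟨⟨ε, hcard⟩, Finsupp.ext fun t => (lex_degree_Qpoly_apply ε t).trans (hε t)⟩

theorem exists_lex_degree_Qpoly_eq_of_mem {n k : ℕ} (hkn : k ≤ n) {g : MvPolynomial (Fin n) F}
    (hg : g ∈ homogeneousSubmodule (Fin n) F (n - k) ⊓ restrictDegree (Fin n) F 1) (hg0 : g ≠ 0) :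
    ∃ ε : Stt n k, MonomialOrder.lex.degree (Qpoly n ε.1) = MonomialOrder.lex.degree g := by
  obtain ⟨hhom, hres⟩ := Submodule.mem_inf.mp hg
  have hsupp := (MonomialOrder.lex.degree_mem_support_iff g).mpr hg0
  refine exists_lex_degree_Qpoly_eq hkn ((mem_restrictDegree _ _ _).mp hres _ hsupp) ?_
  exact ((mem_homogeneousSubmodule _ _).mp hhom).degree_eq_of_mem_support hsupp

theorem Qpoly_basis_general (n k : ℕ) (hkn : k < n) :
    LinearIndependent F (fun ε : Stt n k => Qpoly n ε.1) ∧
    (Submodule.span F (Set.range fun ε : Stt n k => Qpoly n ε.1) :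
      Set (MvPolynomial (Fin n) F)) = Pspace n k := by
  have hQ0 (ε : Stt n k) : Qpoly n ε.1 ≠ 0 := Qpoly_ne_zero ε.1
  have hQP (ε : Stt n k) :
      Qpoly n ε.1 ∈ homogeneousSubmodule (Fin n) F (n - k) ⊓ restrictDegree (Fin n) F 1 :=
    ⟨Qpoly_mem_homogeneousSubmodule ε, Qpoly_mem_restrictDegree ε.1⟩
  refine ⟨MonomialOrder.lex.linearIndependent_of_injective_degree hQ0
    (lex_degree_Qpoly_injective.comp Subtype.val_injective), ?_⟩
  rw [Pspace_eq, SetLike.coe_set_eq]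
  exact le_antisymm (Submodule.span_le.mpr (Set.range_subset_iff.mpr hQP))
    (MonomialOrder.lex.le_span_of_forall_degree_eq hQP hQ0
      fun _ hg hg0 => exists_lex_degree_Qpoly_eq_of_mem hkn.le hg hg0)

/-- The polynomials Q_ε, ε ∈ E, form a ℚ(v)-basis of P(k,n). -/
theorem Qpoly_basis (n k : ℕ) (hk : 0 < k) (hkn : k < n) :
    LinearIndependent F (fun ε : Stt n k => Qpoly n ε.1) ∧
    (Submodule.span F (Set.range fun ε : Stt n k => Qpoly n ε.1) :
      Set (MvPolynomial (Fin n) F)) = Pspace n k :=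
  Qpoly_basis_general n k hkn

end
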